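/- The space of vector-valued polynomials of degree at most k on a domain E ⊂ ℝ² admits the direct sum decomposition [P_k(E)]² = ∇P_{k+1}(E) ⊕ x^⊥ P_{k−1}(E), where x^⊥ = (−x2, x1). -/

import Mathlib

open MvPolynomial


open MvPolynomial Finsupp

private lemma fin2_sum (a : Fin 2 →₀ ℕ) : (a.sum fun _ e => e) = a 0 + a 1 := by
  rw [Finsupp.sum_fintype _ _ (fun _ => rfl), Fin.sum_univ_two]

private lemma coeff_pderiv (i : Fin 2) (p : MvPolynomial (Fin 2) ℝ) (a : Fin 2 →₀ ℕ) :
    coeff a (pderiv i p) = ((a i : ℝ) + 1) * coeff (a + Finsupp.single i 1) p := by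
  induction p using MvPolynomial.induction_on' with
  | add p q hp hq => simp [hp, hq, mul_add]
  | monomial s c =>
    rw [pderiv_monomial, coeff_monomial, coeff_monomial]
    by_cases h : s = a + Finsupp.single i 1
    · have h1 : s - Finsupp.single i 1 = a := by
        rw [h]; exact add_tsub_cancel_right a _
      have h2 : s i = a i + 1 := by rw [h]; simp
      rw [if_pos h1, if_pos h, h2]
      push_cast; ring
    · rw [if_neg h]
      by_cases h0 : s i = 0
      · by_cases h1 : s - Finsupp.single i 1 = a
        · rw [if_pos h1, h0]; simp
        · rw [if_neg h1]; ring
      · have h1 : ¬ (s - Finsupp.single i 1 = a) := by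
          intro he
          apply h
          ext j
          by_cases hj : j = i
          · subst hj
            have := DFunLike.congr_fun he j
            simp [Finsupp.tsub_apply] at this ⊢
            omega
          · have := DFunLike.congr_fun he j
            simp [Finsupp.tsub_apply, Finsupp.single_apply, Ne.symm hj, hj] at this ⊢
            omega
        rw [if_neg h1]; ring

noncomputable def Dinv (c : ℕ) (p : MvPolynomial (Fin 2) ℝ) : MvPolynomial (Fin 2) ℝ :=
  ∑ a ∈ p.support, monomial a (p.coeff a / ((a 0 : ℝ) + a 1 + c))

noncomputable def Lop (c : ℕ) (p : MvPolynomial (Fin 2) ℝ) : MvPolynomial (Fin 2) ℝ :=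
  X 0 * pderiv 0 p + X 1 * pderiv 1 p + C (c : ℝ) * p

private lemma coeff_Dinv (c : ℕ) (p : MvPolynomial (Fin 2) ℝ) (a : Fin 2 →₀ ℕ) :
    coeff a (Dinv c p) = p.coeff a / ((a 0 : ℝ) + a 1 + c) := by
  rw [Dinv]
  rw [coeff_sum]
  simp only [coeff_monomial]
  rw [Finset.sum_ite_eq' p.support a (fun b => p.coeff b / ((b 0 : ℝ) + b 1 + c))]
  by_cases h : a ∈ p.support
  · rw [if_pos h]
  · rw [if_neg h]
    rw [MvPolynomial.notMem_support_iff.mp h, zero_div]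

private lemma coeff_X_mul_pderiv (i : Fin 2) (p : MvPolynomial (Fin 2) ℝ) (a : Fin 2 →₀ ℕ) :
    coeff a (X i * pderiv i p) = (a i : ℝ) * coeff a p := by
  classical
  rw [coeff_X_mul']
  by_cases h : i ∈ a.support
  · rw [if_pos h, coeff_pderiv]
    have hai : 1 ≤ a i := by
      have := Finsupp.mem_support_iff.mp h; omega
    have h1 : (a - Finsupp.single i 1 : Fin 2 →₀ ℕ) i = a i - 1 := by
      rw [Finsupp.tsub_apply, Finsupp.single_eq_same]
    have h2 : a - Finsupp.single i 1 + Finsupp.single i 1 = a := by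
      apply tsub_add_cancel_of_le
      rwa [Finsupp.single_le_iff]
    rw [h1, h2]
    have : ((a i - 1 : ℕ) : ℝ) + 1 = (a i : ℝ) := by
      push_cast [hai]; ring
    rw [this]
  · rw [if_neg h]
    have : a i = 0 := Finsupp.notMem_support_iff.mp h
    rw [this]; simp

private lemma coeff_Lop (c : ℕ) (p : MvPolynomial (Fin 2) ℝ) (a : Fin 2 →₀ ℕ) :
    coeff a (Lop c p) = ((a 0 : ℝ) + a 1 + c) * coeff a p := by
  rw [Lop, coeff_add, coeff_add, coeff_C_mul, coeff_X_mul_pderiv, coeff_X_mul_pderiv]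
  ring

private lemma Dinv_Lop (c : ℕ) (hc : 1 ≤ c) (p : MvPolynomial (Fin 2) ℝ) :
    Dinv c (Lop c p) = p := by
  ext a
  rw [coeff_Dinv, coeff_Lop]
  have hne : ((a 0 : ℝ) + a 1 + c) ≠ 0 := by positivity
  field_simp

private lemma Lop_Dinv (c : ℕ) (hc : 1 ≤ c) (p : MvPolynomial (Fin 2) ℝ) :
    Lop c (Dinv c p) = p := by
  ext a
  rw [coeff_Lop, coeff_Dinv]
  have hne : ((a 0 : ℝ) + a 1 + c) ≠ 0 := by positivity
  field_simp

private lemma Lop_Dinv_zero (p : MvPolynomial (Fin 2) ℝ) (h0 : coeff 0 p = 0) :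
    Lop 0 (Dinv 0 p) = p := by
  ext a
  rw [coeff_Lop, coeff_Dinv]
  by_cases ha : a = 0
  · subst ha; simpa using h0.symm
  · have hn : a 0 + a 1 ≠ 0 := by
      intro hz
      apply ha
      ext j
      fin_cases j <;> simp <;> omega
    have hne : ((a 0 : ℝ) + a 1 + 0) ≠ 0 := by
      have : ((a 0 + a 1 : ℕ) : ℝ) ≠ 0 := Nat.cast_ne_zero.mpr hn
      push_cast at this
      simpa using this
    have hne' : ((a 0 : ℝ) + a 1 + (0:ℕ)) ≠ 0 := by push_cast; simpa using hne
    rw [mul_div_cancel₀ _ hne']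

private lemma Dinv_zero (c : ℕ) : Dinv c 0 = 0 := by
  simp [Dinv]

private lemma pderiv_comm01 (q : MvPolynomial (Fin 2) ℝ) :
    pderiv 0 (pderiv 1 q) = pderiv 1 (pderiv 0 q) := by
  ext a
  rw [coeff_pderiv, coeff_pderiv, coeff_pderiv, coeff_pderiv]
  have h1 : ((a + Finsupp.single 0 1 : Fin 2 →₀ ℕ)) 1 = a 1 := by simp
  have h2 : ((a + Finsupp.single 1 1 : Fin 2 →₀ ℕ)) 0 = a 0 := by simp
  have h3 : a + Finsupp.single 1 1 + Finsupp.single 0 1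
      = a + Finsupp.single 0 1 + Finsupp.single 1 1 := add_right_comm _ _ _
  rw [h1, h2, h3]
  ring

private lemma totalDegree_Dinv_le (c : ℕ) (p : MvPolynomial (Fin 2) ℝ) :
    (Dinv c p).totalDegree ≤ p.totalDegree := by
  rw [MvPolynomial.totalDegree]
  apply Finset.sup_le
  intro a ha
  have h1 : coeff a (Dinv c p) ≠ 0 := MvPolynomial.mem_support_iff.mp ha
  rw [coeff_Dinv] at h1
  have h2 : coeff a p ≠ 0 := fun h => h1 (by rw [h, zero_div])
  exact le_totalDegree (MvPolynomial.mem_support_iff.mpr h2)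

private lemma totalDegree_pderiv_lt {i : Fin 2} {p : MvPolynomial (Fin 2) ℝ} {n : ℕ}
    (h : p.totalDegree ≤ n) (hne : pderiv i p ≠ 0) : (pderiv i p).totalDegree < n := by
  have key : ∀ a ∈ (pderiv i p).support, (a.sum fun _ e => e) + 1 ≤ n := by
    intro a ha
    have hc : coeff a (pderiv i p) ≠ 0 := MvPolynomial.mem_support_iff.mp ha
    rw [coeff_pderiv] at hc
    have hc2 : coeff (a + Finsupp.single i 1) p ≠ 0 := by
      intro hz; rw [hz, mul_zero] at hc; exact hc rfl
    have hle := le_totalDegree (MvPolynomial.mem_support_iff.mpr hc2)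
    have hsum : ((a + Finsupp.single i 1).sum fun _ e => e) = (a.sum fun _ e => e) + 1 := by
      rw [fin2_sum, fin2_sum]
      fin_cases i <;> simp <;> omega
    rw [hsum] at hle
    omega
  obtain ⟨a, ha⟩ := MvPolynomial.support_nonempty.mpr hne
  have hn : 0 < n := by have := key a ha; omega
  rw [MvPolynomial.totalDegree]
  rw [Finset.sup_lt_iff (by simpa using hn)]
  intro b hb
  have := key b hb
  omega

private lemma hC2 : (C (2:ℝ) : MvPolynomial (Fin 2) ℝ) = 2 := by
  simp [map_ofNat]

/-- the decomposition `[P_k]² = ∇P_{k+1} ⊕ x^⊥ P_{k−1}` of planar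
vector polynomials of total degree at most `k`: every pair `(p₁, p₂)` of
polynomials of degree `≤ k` is, in a unique way, the sum of a gradient
`(∂q/∂x₁, ∂q/∂x₂)` with `q ∈ P_{k+1}` and of `x^⊥ r = (−x₂ r, x₁ r)` with
`r ∈ P_{k−1}` (`r = 0` when `k = 0`).  Uniqueness is of the two summands. -/
theorem vector_poly_directSum_decomposition (k : ℕ) (p₁ p₂ : MvPolynomial (Fin 2) ℝ)
    (h₁ : p₁.totalDegree ≤ k) (h₂ : p₂.totalDegree ≤ k) :
    ∃! gr : (MvPolynomial (Fin 2) ℝ × MvPolynomial (Fin 2) ℝ) × MvPolynomial (Fin 2) ℝ,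
      (∃ q : MvPolynomial (Fin 2) ℝ, q.totalDegree ≤ k + 1 ∧
          gr.1 = (pderiv 0 q, pderiv 1 q)) ∧
      (gr.2 = 0 ∨ gr.2.totalDegree < k) ∧
      p₁ = gr.1.1 + (-(X 1)) * gr.2 ∧
      p₂ = gr.1.2 + (X 0) * gr.2 := by
  classical
  have h01 : (0 : Fin 2) ≠ 1 := by decide
  have h10 : (1 : Fin 2) ≠ 0 := by decide
  set w : MvPolynomial (Fin 2) ℝ := pderiv 0 p₂ - pderiv 1 p₁ with hw
  set r : MvPolynomial (Fin 2) ℝ := Dinv 2 w with hr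
  have hLr : Lop 2 r = w := Lop_Dinv 2 (by norm_num) w
  rw [Lop, show ((2:ℕ):ℝ) = (2:ℝ) from by norm_num, hC2] at hLr
  set s₁ : MvPolynomial (Fin 2) ℝ := p₁ + X 1 * r with hs1
  set s₂ : MvPolynomial (Fin 2) ℝ := p₂ - X 0 * r with hs2
  have hcurl : pderiv 0 s₂ = pderiv 1 s₁ := by
    rw [hs1, hs2]
    simp only [map_add, map_sub, pderiv_mul, pderiv_X_self, pderiv_X_of_ne h10,
      pderiv_X_of_ne h01]
    linear_combination - hLr
  set F : MvPolynomial (Fin 2) ℝ := X 0 * s₁ + X 1 * s₂ with hF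
  set q : MvPolynomial (Fin 2) ℝ := Dinv 0 F with hq
  have hF0 : coeff 0 F = 0 := by
    rw [hF, coeff_add, coeff_X_mul', coeff_X_mul']
    simp
  have hLq : Lop 0 q = F := Lop_Dinv_zero F hF0
  -- commutation: pderiv i (Lop 0 q) = Lop 1 (pderiv i q)
  have com0 : pderiv 0 (Lop 0 q) = Lop 1 (pderiv 0 q) := by
    simp only [Lop, map_add, map_mul, pderiv_mul, pderiv_X_self, pderiv_X_of_ne h10,
      pderiv_X_of_ne h01, Nat.cast_zero, Nat.cast_one, map_zero, map_one]
    rw [pderiv_comm01 q]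
    ring
  have com1 : pderiv 1 (Lop 0 q) = Lop 1 (pderiv 1 q) := by
    simp only [Lop, map_add, map_mul, pderiv_mul, pderiv_X_self, pderiv_X_of_ne h10,
      pderiv_X_of_ne h01, Nat.cast_zero, Nat.cast_one, map_zero, map_one]
    rw [pderiv_comm01 q]
    ring
  have hgrad0 : pderiv 0 q = s₁ := by
    have e1 : Lop 1 (pderiv 0 q) = Lop 1 s₁ := by
      rw [← com0, hLq, hF]
      simp only [map_add, pderiv_mul, pderiv_X_self, pderiv_X_of_ne h10, pderiv_X_of_ne h01,
        Lop, Nat.cast_one, map_one]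
      rw [hcurl]
      ring
    calc pderiv 0 q = Dinv 1 (Lop 1 (pderiv 0 q)) := (Dinv_Lop 1 le_rfl _).symm
      _ = Dinv 1 (Lop 1 s₁) := by rw [e1]
      _ = s₁ := Dinv_Lop 1 le_rfl _
  have hgrad1 : pderiv 1 q = s₂ := by
    have e1 : Lop 1 (pderiv 1 q) = Lop 1 s₂ := by
      rw [← com1, hLq, hF]
      simp only [map_add, pderiv_mul, pderiv_X_self, pderiv_X_of_ne h10, pderiv_X_of_ne h01,
        Lop, Nat.cast_one, map_one]
      rw [hcurl]
      ring
    calc pderiv 1 q = Dinv 1 (Lop 1 (pderiv 1 q)) := (Dinv_Lop 1 le_rfl _).symm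
      _ = Dinv 1 (Lop 1 s₂) := by rw [e1]
      _ = s₂ := Dinv_Lop 1 le_rfl _
  -- degree bounds
  have hr_deg : r = 0 ∨ r.totalDegree < k := by
    by_cases hwz : w = 0
    · left; rw [hr, hwz, Dinv_zero]
    · right
      have hwlt : w.totalDegree < k := by
        by_cases hz2 : pderiv 0 p₂ = 0
        · by_cases hz1 : pderiv 1 p₁ = 0
          · exact absurd (by rw [hw, hz1, hz2, sub_zero]) hwz
          · have := totalDegree_pderiv_lt h₁ hz1
            calc w.totalDegree = (-(pderiv 1 p₁)).totalDegree := by rw [hw, hz2, zero_sub]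
              _ = (pderiv 1 p₁).totalDegree := totalDegree_neg _
              _ < k := this
        · by_cases hz1 : pderiv 1 p₁ = 0
          · have := totalDegree_pderiv_lt h₂ hz2
            calc w.totalDegree = (pderiv 0 p₂).totalDegree := by rw [hw, hz1, sub_zero]
              _ < k := this
          · calc w.totalDegree ≤ max (pderiv 0 p₂).totalDegree (pderiv 1 p₁).totalDegree :=
                totalDegree_sub _ _
              _ < k := max_lt (totalDegree_pderiv_lt h₂ hz2) (totalDegree_pderiv_lt h₁ hz1)
      exact lt_of_le_of_lt (totalDegree_Dinv_le 2 w) hwlt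
  have hXr : ∀ i : Fin 2, (X i * r).totalDegree ≤ k := by
    intro i
    rcases hr_deg with h | h
    · rw [h, mul_zero]; simp
    · calc (X i * r).totalDegree ≤ (X i : MvPolynomial (Fin 2) ℝ).totalDegree + r.totalDegree :=
          totalDegree_mul _ _
        _ = 1 + r.totalDegree := by rw [totalDegree_X]
        _ ≤ k := by omega
  have hs1_deg : s₁.totalDegree ≤ k :=
    le_trans (totalDegree_add _ _) (max_le h₁ (hXr 1))
  have hs2_deg : s₂.totalDegree ≤ k :=
    le_trans (totalDegree_sub _ _) (max_le h₂ (hXr 0))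
  have hq_deg : q.totalDegree ≤ k + 1 := by
    refine le_trans (totalDegree_Dinv_le 0 F) (le_trans (totalDegree_add _ _) (max_le ?_ ?_)) <;>
    · refine le_trans (totalDegree_mul _ _) ?_
      rw [totalDegree_X]
      omega
  refine ⟨((s₁, s₂), r), ⟨⟨q, hq_deg, by rw [hgrad0, hgrad1]⟩, hr_deg, by rw [hs1]; ring,
    by rw [hs2]; ring⟩, ?_⟩
  rintro ⟨⟨g1, g2⟩, r'⟩ ⟨⟨q', hq'deg, hgq⟩, hrd', he1, he2⟩
  simp only [Prod.mk.injEq] at hgq he1 he2 ⊢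
  obtain ⟨hg1, hg2⟩ := hgq
  have cg : pderiv 0 g2 = pderiv 1 g1 := by
    rw [hg1, hg2, pderiv_comm01]
  have eg1 : g1 = s₁ + X 1 * (r' - r) := by
    rw [hs1]; linear_combination -he1
  have eg2 : g2 = s₂ - X 0 * (r' - r) := by
    rw [hs2]; linear_combination -he2
  have hLρ : Lop 2 (r' - r) = 0 := by
    rw [Lop, show ((2:ℕ):ℝ) = (2:ℝ) from by norm_num, hC2]
    rw [eg1, eg2] at cg
    simp only [map_add, map_sub, pderiv_mul, pderiv_X_self, pderiv_X_of_ne h10,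
      pderiv_X_of_ne h01] at cg
    simp only [map_sub]
    linear_combination hcurl - cg
  have hρ0 : r' - r = 0 := by
    have h := Dinv_Lop 2 (by norm_num) (r' - r)
    rw [hLρ, Dinv_zero] at h
    exact h.symm
  have hrr : r' = r := sub_eq_zero.mp hρ0
  rw [hρ0, mul_zero, add_zero] at eg1
  rw [hρ0, mul_zero, sub_zero] at eg2
  exact ⟨⟨eg1, eg2⟩, hrr⟩
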